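/- Let G be a finite simple graph without isolated vertices and let D be an optimal dominating set in G. If v ∈ D is not an isolated vertex of the induced subgraph G[D], then v has at least 2 private neighbors with respect to D. -/

import Mathlib

/-- `D` is a dominating set of `G`: every vertex lies in `D` or has a neighbor in `D`. -/
def IsDomSet {V : Type*} (G : SimpleGraph V) (D : Set V) : Prop :=
  ∀ v : V, v ∈ D ∨ ∃ u ∈ D, G.Adj u v

/-- `S` is an independent set of `G`. -/
def IsIndep {V : Type*} (G : SimpleGraph V) (S : Set V) : Prop :=
  S.Pairwise fun u v => ¬ G.Adj u v

/-- The domination number of `G`: the minimum size of a dominating set. -/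
noncomputable def gamma {V : Type*} (G : SimpleGraph V) : ℕ :=
  sInf {n | ∃ D : Set V, IsDomSet G D ∧ D.ncard = n}

/-- The independence number of `G`: the maximum size of an independent set. -/
noncomputable def alpha {V : Type*} (G : SimpleGraph V) : ℕ :=
  sSup {n | ∃ S : Set V, IsIndep G S ∧ S.ncard = n}

/-- The inverse domination number of `G`: the minimum size of a dominating set
disjoint from some minimum dominating set. -/
noncomputable def invGamma {V : Type*} (G : SimpleGraph V) : ℕ :=
  sInf {n | ∃ D T : Set V, IsDomSet G D ∧ D.ncard = gamma G ∧
    IsDomSet G T ∧ D ∩ T = ∅ ∧ T.ncard = n}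

/-- The independence number of the subgraph of `G` induced by `D`. -/
noncomputable def alphaOn {V : Type*} (G : SimpleGraph V) (D : Set V) : ℕ :=
  sSup {n | ∃ S : Set V, S ⊆ D ∧ IsIndep G S ∧ S.ncard = n}

/-- The number of edges of the subgraph of `G` induced by `D`. -/
noncomputable def edgeCountOn {V : Type*} (G : SimpleGraph V) (D : Set V) : ℕ :=
  {e ∈ G.edgeSet | ∀ v ∈ e, v ∈ D}.ncard

/-- `D` is an optimal dominating set: of minimum size; among those, `G[D]` has
maximum independence number; and subject to that, `G[D]` has fewest edges. -/
def IsOptimalDomSet {V : Type*} (G : SimpleGraph V) (D : Set V) : Prop :=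
  IsDomSet G D ∧ D.ncard = gamma G ∧
  (∀ D' : Set V, IsDomSet G D' → D'.ncard = gamma G → alphaOn G D' ≤ alphaOn G D) ∧
  (∀ D' : Set V, IsDomSet G D' → D'.ncard = gamma G →
    alphaOn G D' = alphaOn G D → edgeCountOn G D ≤ edgeCountOn G D')

/-- `w` is a private neighbor of `v` with respect to `D`: `w ∉ D` and `N(w) ∩ D = {v}`. -/
def IsPrivateNbr {V : Type*} (G : SimpleGraph V) (D : Set V) (v w : V) : Prop :=
  w ∉ D ∧ G.Adj v w ∧ ∀ u ∈ D, G.Adj u w → u = v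

/-- `R` is a partial independent set of representatives (partial ISR) for the family `P`:
an independent set consisting of distinct representatives of some subfamily of `P`. -/
def IsPartialISR {V : Type*} (G : SimpleGraph V) {n : ℕ} (P : Fin n → Set V)
    (R : Set V) : Prop :=
  IsIndep G R ∧ ∃ (J : Set (Fin n)) (x : Fin n → V),
    Set.InjOn x J ∧ (∀ j ∈ J, x j ∈ P j) ∧ R = x '' J

/-- `b(G)`: the largest number of vertices of an induced bipartite subgraph of `G`. -/
noncomputable def bipNum {V : Type*} (G : SimpleGraph V) : ℕ :=
  sSup {n | ∃ B A : Set V, A ⊆ B ∧ IsIndep G A ∧ IsIndep G (B \ A) ∧ B.ncard = n}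


/-!
If `v` had no private neighbor, `D \ {v}` would still dominate (`v` itself is dominated by its
neighbor in `D`), contradicting minimality. If `v` had exactly one private neighbor `w`, then
`D' = (D \ {v}) ∪ {w}` is again a minimum dominating set. As `w` has no neighbor in `D \ {v}`,
replacing `v` by `w` in an independent subset of `D` keeps it independent, so `G[D']` has
independence number at least that of `G[D]`, while `G[D']` has the edges of `G[D \ {v}]`, strictly
fewer than `G[D]` since `v` has a neighbor in `D`. This contradicts the optimality of `D`.
-/

section

variable {V : Type*} {G : SimpleGraph V} {D S T : Set V} {u v w : V}

theorem gamma_le_ncard (hD : IsDomSet G D) : gamma G ≤ D.ncard :=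
  Nat.sInf_le ⟨D, hD, rfl⟩

theorem IsPrivateNbr.not_adj (hw : IsPrivateNbr G D v w) (hu : u ∈ D \ {v}) : ¬ G.Adj u w :=
  fun huw => hu.2 (hw.2.2 u hu.1 huw)

theorem IsDomSet.exists_adj_of_not_isPrivateNbr (hD : IsDomSet G D) (hx : w ∉ D)
    (hw : ¬ IsPrivateNbr G D v w) : ∃ u ∈ D \ {v}, G.Adj u w := by
  obtain hwD | ⟨u, hu, huw⟩ := hD w
  · exact absurd hwD hx
  by_cases huv : u = v
  · subst huv
    by_contra! hnone
    exact hw ⟨hx, huw, fun u' hu' hu'w => by_contra fun hne => hnone u' ⟨hu', hne⟩ hu'w⟩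
  · exact ⟨u, ⟨hu, huv⟩, huw⟩

theorem IsDomSet.sdiff_singleton_union (hD : IsDomSet G D)
    (hS : ∀ w, IsPrivateNbr G D v w → w ∈ S) (hv : ∃ u ∈ D \ {v} ∪ S, G.Adj u v) :
    IsDomSet G (D \ {v} ∪ S) := by
  intro x
  by_cases hxv : x = v
  · exact Or.inr (hxv ▸ hv)
  by_cases hxD : x ∈ D
  · exact Or.inl (Or.inl ⟨hxD, hxv⟩)
  by_cases hxS : x ∈ S
  · exact Or.inl (Or.inr hxS)
  obtain ⟨u, hu, hux⟩ := hD.exists_adj_of_not_isPrivateNbr hxD (fun hx => hxS (hS x hx))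
  exact Or.inr ⟨u, Or.inl hu, hux⟩

theorem edgeCountOn_insert_of_forall_not_adj (hT : ∀ u ∈ T, ¬ G.Adj u w) :
    edgeCountOn G (insert w T) = edgeCountOn G T := by
  unfold edgeCountOn
  congr 1
  ext e
  refine ⟨fun ⟨he, heT⟩ => ⟨he, ?_⟩, fun ⟨he, heT⟩ => ⟨he, fun x hx => Or.inr (heT x hx)⟩⟩
  induction e using Sym2.ind with
  | _ a b =>
    have hab : G.Adj a b := he
    obtain ha | ha := heT a (Sym2.mem_mk_left a b) <;>
      obtain hb | hb := heT b (Sym2.mem_mk_right a b)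
    · exact absurd (ha.trans hb.symm) hab.ne
    · exact absurd (ha ▸ hab.symm) (hT b hb)
    · exact absurd (hb ▸ hab) (hT a ha)
    · rintro x hx
      rcases Sym2.mem_iff.mp hx with rfl | rfl
      exacts [ha, hb]

section Finite

variable [Finite V]

theorem bddAbove_ncard_isIndep_subset (G : SimpleGraph V) (D : Set V) :
    BddAbove {n | ∃ S : Set V, S ⊆ D ∧ IsIndep G S ∧ S.ncard = n} := by
  refine ⟨Nat.card V, ?_⟩
  rintro _ ⟨S, -, -, rfl⟩
  rw [← Set.ncard_univ]
  exact Set.ncard_le_ncard (Set.subset_univ S)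

theorem ncard_le_alphaOn (hSD : S ⊆ D) (hS : IsIndep G S) : S.ncard ≤ alphaOn G D :=
  le_csSup (bddAbove_ncard_isIndep_subset G D) ⟨S, hSD, hS, rfl⟩

theorem exists_isIndep_ncard_eq_alphaOn (G : SimpleGraph V) (D : Set V) :
    ∃ S ⊆ D, IsIndep G S ∧ S.ncard = alphaOn G D := by
  have hne : {n | ∃ S : Set V, S ⊆ D ∧ IsIndep G S ∧ S.ncard = n}.Nonempty :=
    ⟨0, ∅, Set.empty_subset D, Set.pairwise_empty _, Set.ncard_empty V⟩
  exact Nat.sSup_mem hne (bddAbove_ncard_isIndep_subset G D)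

theorem alphaOn_insert_le_alphaOn_insert (hwT : w ∉ T) (hT : ∀ u ∈ T, ¬ G.Adj u w) (v : V) :
    alphaOn G (insert v T) ≤ alphaOn G (insert w T) := by
  obtain ⟨S, hST, hS, hScard⟩ := exists_isIndep_ncard_eq_alphaOn G (insert v T)
  have hSv : S \ {v} ⊆ T := fun x hx => (hST hx.1).resolve_left hx.2
  have hS' : IsIndep G (insert w (S \ {v})) :=
    (hS.mono Set.sdiff_subset).insert fun x hx _ =>
      ⟨fun hwx => hT x (hSv hx) hwx.symm, hT x (hSv hx)⟩
  calc alphaOn G (insert v T) = S.ncard := hScard.symm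
    _ ≤ (insert w (S \ {v})).ncard := by
      rw [Set.ncard_insert_of_notMem fun hw => hwT (hSv hw)]
      simpa using Set.ncard_le_ncard_sdiff_add_ncard S {v}
    _ ≤ alphaOn G (insert w T) := ncard_le_alphaOn (Set.insert_subset_insert hSv) hS'

theorem edgeCountOn_sdiff_singleton_lt (hv : v ∈ D) (hu : u ∈ D) (hvu : G.Adj v u) :
    edgeCountOn G (D \ {v}) < edgeCountOn G D := by
  refine Set.ncard_lt_ncard ⟨fun e ⟨he, heD⟩ => ⟨he, fun x hx => (heD x hx).1⟩, fun hsub => ?_⟩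
  have hvu_mem : s(v, u) ∈ {e ∈ G.edgeSet | ∀ x ∈ e, x ∈ D} := by
    refine ⟨hvu, fun x hx => ?_⟩
    rcases Sym2.mem_iff.mp hx with rfl | rfl
    exacts [hv, hu]
  exact ((hsub hvu_mem).2 v (Sym2.mem_mk_left v u)).2 rfl

end Finite

end

theorem two_private_neighbors_general {V : Type*} [Fintype V] (G : SimpleGraph V)
    (D : Set V) (hopt : IsOptimalDomSet G D)
    (v : V) (hv : v ∈ D) (hviso : ∃ u ∈ D, G.Adj v u) :
    2 ≤ {w : V | IsPrivateNbr G D v w}.ncard := by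
  obtain ⟨hdom, hγ, hα, hE⟩ := hopt
  obtain ⟨u, hu, hvu⟩ := hviso
  by_contra! hlt
  obtain hnone | ⟨w, hone⟩ := (Set.ncard_le_one_iff_eq).mp (Nat.le_of_lt_succ hlt)
  · have hdom' := hdom.sdiff_singleton_union (S := ∅) (fun w hw => hnone.subset hw)
      ⟨u, Or.inl ⟨hu, hvu.ne'⟩, hvu.symm⟩
    have hle := gamma_le_ncard hdom'
    rw [Set.union_empty] at hle
    have := Set.ncard_sdiff_singleton_add_one hv
    omega
  have hw : IsPrivateNbr G D v w := hone.symm.subset (Set.mem_singleton w)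
  have hT : ∀ x ∈ D \ {v}, ¬ G.Adj x w := fun _ => hw.not_adj
  have hwT : w ∉ D \ {v} := fun h => hw.1 h.1
  set D' := insert w (D \ {v})
  have hdom' : IsDomSet G D' := by
    simpa [D', Set.union_singleton] using
      hdom.sdiff_singleton_union (fun x hx => hone.subset hx) ⟨w, Or.inr rfl, hw.2.1.symm⟩
  have hcard : D'.ncard = gamma G := by
    rw [Set.ncard_insert_of_notMem hwT, Set.ncard_sdiff_singleton_add_one hv, hγ]
  have halpha : alphaOn G D' = alphaOn G D := by
    refine le_antisymm (hα D' hdom' hcard) ?_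
    simpa [Set.insert_eq_of_mem hv] using alphaOn_insert_le_alphaOn_insert hwT hT v
  have hedge := hE D' hdom' hcard halpha
  rw [edgeCountOn_insert_of_forall_not_adj hT] at hedge
  exact (edgeCountOn_sdiff_singleton_lt hv hu hvu).not_ge hedge

theorem two_private_neighbors {V : Type*} [Fintype V] (G : SimpleGraph V)
    (hiso : ∀ v : V, ∃ u, G.Adj v u)
    (D : Set V) (hopt : IsOptimalDomSet G D)
    (v : V) (hv : v ∈ D) (hviso : ∃ u ∈ D, G.Adj v u) :
    2 ≤ {w : V | IsPrivateNbr G D v w}.ncard :=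
  two_private_neighbors_general G D hopt v hv hviso
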